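/- arXiv:2410.22295 — 3 statements merged into one kernel-verified Lean document; each statement's English description precedes it below -/
import Mathlib

section
/- Let [p_I, p_X, p_Y, p_Z] be a probability distribution with 1/2 < p_I < 1, and let p_Q = min{p_X, p_Y, p_Z}. Write the remaining two error probabilities as p_R, p_S. Define p_pass = (p_I + p_Q)² + (p_R + p_S)² and p_I' = (p_I² + p_Q²)/p_pass. Then p_I' > p_I. -/
theorem greedy_recurrence_fidelity_improvement
    (pI pX pY pZ : ℝ)
    (hX : 0 ≤ pX) (hY : 0 ≤ pY) (hZ : 0 ≤ pZ)
    (hsum : pI + pX + pY + pZ = 1)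
    (hI1 : 1 / 2 < pI) (hI2 : pI < 1) :
    let pQ := min (min pX pY) pZ
    let ppass := (pI + pQ) ^ 2 + (1 - pI - pQ) ^ 2
    (pI ^ 2 + pQ ^ 2) / ppass > pI := by
  intro pQ ppass
  have hQ0 : 0 ≤ pQ := le_min (le_min hX hY) hZ
  have hQX : pQ ≤ pX := (min_le_left (min pX pY) pZ).trans (min_le_left pX pY)
  have hQY : pQ ≤ pY := (min_le_left (min pX pY) pZ).trans (min_le_right pX pY)
  have hQZ : pQ ≤ pZ := min_le_right _ _
  have h3 : 3 * pQ ≤ 1 - pI := by linarith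
  have hpos : 0 < ppass := by positivity
  have h2a : (0:ℝ) < 2 * pI - 1 := by linarith
  have hmul : (3 * pQ) * (3 * pQ + 6 * pI) ≤ (1 - pI) * (1 + 5 * pI) := by
    have := mul_le_mul h3 (by linarith : 3 * pQ + 6 * pI ≤ 1 + 5 * pI)
      (by linarith) (by linarith)
    linarith
  have hineq : pQ * (pQ + 2 * pI) < pI * (1 - pI) := by nlinarith
  have key : pI * ((pI + pQ) ^ 2 + (1 - pI - pQ) ^ 2) < pI ^ 2 + pQ ^ 2 := by
    nlinarith [mul_pos h2a (sub_pos.2 hineq)]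
  rw [gt_iff_lt, lt_div_iff₀ hpos]
  exact key
end

section
/- Let [p_I, p_X, p_Y, p_Z] be a probability distribution with p_I > 1/2, and let Q* ∈ {X,Y,Z} achieve the minimum of p_X, p_Y, p_Z. For Q ∈ {X,Y,Z}, define F(Q) = (p_I² + p_Q²)/((p_I + p_Q)² + (1 - p_I - p_Q)²). Then F(Q*) ≥ F(Q̃) for every Q̃ ∈ {X,Y,Z}. -/
lemma greedy_key (pI a b : ℝ) (hI : 1 / 2 < pI) (ha : 0 ≤ a) (hab : a ≤ b)
    (hb : b ≤ 1 - pI) :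
    (pI ^ 2 + a ^ 2) / ((pI + a) ^ 2 + (1 - pI - a) ^ 2) ≥
      (pI ^ 2 + b ^ 2) / ((pI + b) ^ 2 + (1 - pI - b) ^ 2) := by
  have hpI : 0 < pI := by linarith
  have hpa : 0 < pI + a := by linarith
  have hpb : 0 < pI + b := by linarith
  have hDa : 0 < (pI + a) ^ 2 + (1 - pI - a) ^ 2 := by
    have := pow_pos hpa 2; nlinarith [sq_nonneg (1 - pI - a)]
  have hDb : 0 < (pI + b) ^ 2 + (1 - pI - b) ^ 2 := by
    have := pow_pos hpb 2; nlinarith [sq_nonneg (1 - pI - b)]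
  rw [ge_iff_le, div_le_div_iff₀ hDb hDa]
  have hb2 : b ≤ 1 / 2 := by linarith
  have hfac : 0 ≤ (a + b) + 2 * (pI ^ 2 - a * b) := by
    nlinarith [mul_nonneg ha (sub_nonneg.2 hb2), sq_nonneg pI]
  have key : 0 ≤ (b - a) * (2 * pI - 1) * ((a + b) + 2 * (pI ^ 2 - a * b)) :=
    mul_nonneg (mul_nonneg (sub_nonneg.2 hab) (by linarith)) hfac
  nlinarith [key]

theorem greedy_recurrence_optimality
    (pI pX pY pZ : ℝ)
    (hX : 0 ≤ pX) (hY : 0 ≤ pY) (hZ : 0 ≤ pZ)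
    (hsum : pI + pX + pY + pZ = 1)
    (hI : 1 / 2 < pI)
    (F : ℝ → ℝ)
    (hF : ∀ q, F q = (pI ^ 2 + q ^ 2) / ((pI + q) ^ 2 + (1 - pI - q) ^ 2)) :
    ∀ q ∈ ({pX, pY, pZ} : Set ℝ), F (min (min pX pY) pZ) ≥ F q := by
  intro q hq
  have hm0 : 0 ≤ min (min pX pY) pZ := le_min (le_min hX hY) hZ
  have hmq : min (min pX pY) pZ ≤ q := by
    rcases hq with h | h | h <;> subst h
    · exact le_trans (min_le_left _ _) (min_le_left _ _)
    · exact le_trans (min_le_left _ _) (min_le_right _ _)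
    · exact min_le_right _ _
  have hqb : q ≤ 1 - pI := by
    rcases hq with h | h | h <;> subst h <;> linarith
  rw [hF, hF]
  exact greedy_key pI _ q hI hm0 hmq hqb
end

section
/- There exists γ ∈ (0,1) for which the dual-rail yield (1-γ)/2 exceeds the reverse coherent information of the amplitude damping channel; specifically, at γ = 2/3, (1-γ)/2 = 1/6 > max_{0≤x≤1} [h_b(x) - h_b(γx)]. -/
/-!
For any reference point `a`, binary entropy splits into cross entropy minus relative entropy,
`h(x) = CE(x, a) - D(x ‖ a)`. The map `x ↦ γ x` is the action of the amplitude damping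
channel on the excited-state population, `1 - γ x = (1 - x) + (1 - γ) x`, so the log-sum
inequality gives data processing, `D(γ x ‖ γ a) ≤ D(x ‖ a)`. Hence
`h(x) - h(γ x) ≤ CE(x, a) - CE(γ x, γ a)`, which is affine in `x` and so at most its larger value
at `x = 0` and `x = 1`. For `γ = 2/3` and `a = 6/23` (close to the maximiser) the two endpoint
values stay below `1/6` because `19⁶ < 2 · 17⁶` and `4⁴ · 19² < 2 · 6⁶`.
-/

/-- Binary entropy function (base 2). -/
noncomputable def binEnt (t : ℝ) : ℝ := -t * Real.logb 2 t - (1 - t) * Real.logb 2 (1 - t)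

open Real Set

theorem mul_log_div_add_le_add {p₁ p₂ q₁ q₂ : ℝ} (hp₁ : 0 ≤ p₁) (hp₂ : 0 ≤ p₂)
    (hq₁ : 0 < q₁) (hq₂ : 0 < q₂) :
    (p₁ + p₂) * log ((p₁ + p₂) / (q₁ + q₂)) ≤ p₁ * log (p₁ / q₁) + p₂ * log (p₂ / q₂) := by
  have hq : 0 < q₁ + q₂ := add_pos hq₁ hq₂
  have hmean : q₁ / (q₁ + q₂) * (p₁ / q₁) + q₂ / (q₁ + q₂) * (p₂ / q₂)
      = (p₁ + p₂) / (q₁ + q₂) := by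
    field_simp
  have h := convexOn_mul_log.2 (mem_Ici.2 (div_nonneg hp₁ hq₁.le))
    (mem_Ici.2 (div_nonneg hp₂ hq₂.le)) (div_nonneg hq₁.le hq.le) (div_nonneg hq₂.le hq.le)
    (by field_simp)
  simp only [smul_eq_mul, hmean] at h
  calc (p₁ + p₂) * log ((p₁ + p₂) / (q₁ + q₂))
      = (q₁ + q₂) * ((p₁ + p₂) / (q₁ + q₂) * log ((p₁ + p₂) / (q₁ + q₂))) := by field_simp
    _ ≤ (q₁ + q₂) * (q₁ / (q₁ + q₂) * (p₁ / q₁ * log (p₁ / q₁))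
          + q₂ / (q₁ + q₂) * (p₂ / q₂ * log (p₂ / q₂))) := by gcongr
    _ = p₁ * log (p₁ / q₁) + p₂ * log (p₂ / q₂) := by field_simp

theorem mul_logb_div_add_le_add {b p₁ p₂ q₁ q₂ : ℝ} (hb : 1 < b) (hp₁ : 0 ≤ p₁) (hp₂ : 0 ≤ p₂)
    (hq₁ : 0 < q₁) (hq₂ : 0 < q₂) :
    (p₁ + p₂) * logb b ((p₁ + p₂) / (q₁ + q₂)) ≤
      p₁ * logb b (p₁ / q₁) + p₂ * logb b (p₂ / q₂) := by
  simp only [logb, mul_div_assoc', ← add_div]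
  exact div_le_div_of_nonneg_right (mul_log_div_add_le_add hp₁ hp₂ hq₁ hq₂) (log_pos hb).le

theorem mul_logb_div {a : ℝ} (b x : ℝ) (ha : a ≠ 0) :
    x * logb b (x / a) = x * logb b x - x * logb b a := by
  rcases eq_or_ne x 0 with rfl | hx
  · simp
  · rw [logb_div hx ha, mul_sub]

noncomputable def binCrossEnt (x a : ℝ) : ℝ := -x * logb 2 a - (1 - x) * logb 2 (1 - a)

noncomputable def binRelEnt (x a : ℝ) : ℝ :=
  x * logb 2 (x / a) + (1 - x) * logb 2 ((1 - x) / (1 - a))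

theorem binEnt_eq_binCrossEnt_sub_binRelEnt {a : ℝ} (x : ℝ) (ha₀ : a ≠ 0) (ha₁ : a ≠ 1) :
    binEnt x = binCrossEnt x a - binRelEnt x a := by
  rw [binEnt, binCrossEnt, binRelEnt, mul_logb_div _ _ ha₀,
    mul_logb_div _ _ (sub_ne_zero.2 ha₁.symm)]
  ring

theorem binRelEnt_mul_le {γ a x : ℝ} (hγ₀ : 0 < γ) (hγ₁ : γ < 1) (ha₀ : 0 < a) (ha₁ : a < 1)
    (hx₀ : 0 ≤ x) (hx₁ : x ≤ 1) :
    binRelEnt (γ * x) (γ * a) ≤ binRelEnt x a := by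
  have hγ : 0 < 1 - γ := sub_pos.2 hγ₁
  have hlogsum := mul_logb_div_add_le_add one_lt_two (sub_nonneg.2 hx₁) (mul_nonneg hγ.le hx₀)
    (sub_pos.2 ha₁) (mul_pos hγ ha₀)
  rw [mul_div_mul_left _ _ hγ.ne', show 1 - x + (1 - γ) * x = 1 - γ * x by ring,
    show 1 - a + (1 - γ) * a = 1 - γ * a by ring] at hlogsum
  rw [binRelEnt, binRelEnt, mul_div_mul_left _ _ hγ₀.ne']
  linarith

theorem binEnt_sub_binEnt_mul_le {γ a x : ℝ} (hγ₀ : 0 < γ) (hγ₁ : γ < 1) (ha₀ : 0 < a)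
    (ha₁ : a < 1) (hx₀ : 0 ≤ x) (hx₁ : x ≤ 1) :
    binEnt x - binEnt (γ * x) ≤ binCrossEnt x a - binCrossEnt (γ * x) (γ * a) := by
  have hγa₁ : γ * a < 1 := lt_of_le_of_lt (mul_le_of_le_one_left ha₀.le hγ₁.le) ha₁
  rw [binEnt_eq_binCrossEnt_sub_binRelEnt x ha₀.ne' ha₁.ne,
    binEnt_eq_binCrossEnt_sub_binRelEnt (γ * x) (mul_pos hγ₀ ha₀).ne' hγa₁.ne]
  linarith [binRelEnt_mul_le hγ₀ hγ₁ ha₀ ha₁ hx₀ hx₁]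

theorem binCrossEnt_sub_binCrossEnt_mul (γ a x : ℝ) :
    binCrossEnt x a - binCrossEnt (γ * x) (γ * a) =
      (1 - x) * (binCrossEnt 0 a - binCrossEnt 0 (γ * a))
        + x * (binCrossEnt 1 a - binCrossEnt γ (γ * a)) := by
  simp only [binCrossEnt]
  ring

theorem binEnt_sub_binEnt_mul_lt {γ a c x : ℝ} (hγ₀ : 0 < γ) (hγ₁ : γ < 1) (ha₀ : 0 < a)
    (ha₁ : a < 1) (h₀ : binCrossEnt 0 a - binCrossEnt 0 (γ * a) < c)
    (h₁ : binCrossEnt 1 a - binCrossEnt γ (γ * a) < c) (hx : x ∈ Icc 0 1) :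
    binEnt x - binEnt (γ * x) < c := by
  obtain ⟨hx₀, hx₁⟩ := hx
  set A := binCrossEnt 0 a - binCrossEnt 0 (γ * a)
  set B := binCrossEnt 1 a - binCrossEnt γ (γ * a)
  calc binEnt x - binEnt (γ * x)
      ≤ binCrossEnt x a - binCrossEnt (γ * x) (γ * a) :=
        binEnt_sub_binEnt_mul_le hγ₀ hγ₁ ha₀ ha₁ hx₀ hx₁
    _ = (1 - x) * A + x * B := binCrossEnt_sub_binCrossEnt_mul γ a x
    _ ≤ (1 - x) * max A B + x * max A B := by
        gcongr
        exacts [le_max_left A B, le_max_right A B]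
    _ = max A B := by ring
    _ < c := max_lt h₀ h₁

theorem dual_rail_beats_reverse_coherent_information :
    ∃ γ : ℝ, γ ∈ Set.Ioo (0 : ℝ) 1 ∧ γ = 2 / 3 ∧ (1 - γ) / 2 = 1 / 6 ∧
      ∀ x ∈ Set.Icc (0 : ℝ) 1, binEnt x - binEnt (γ * x) < (1 - γ) / 2 := by
  have hlog₂ := log_pos one_lt_two
  have h₀ : binCrossEnt 0 (6 / 23) - binCrossEnt 0 (2 / 3 * (6 / 23)) < 1 / 6 := by
    have key : log ((19 / 23) ^ 6) < log (2 * (17 / 23) ^ 6) :=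
      log_lt_log (by norm_num) (by norm_num)
    rw [log_mul (by norm_num) (by norm_num), log_pow, log_pow] at key
    norm_num [binCrossEnt, logb]
    field_simp
    linarith
  have h₁ : binCrossEnt 1 (6 / 23) - binCrossEnt (2 / 3) (2 / 3 * (6 / 23)) < 1 / 6 := by
    have key : log ((4 / 23) ^ 4 * (19 / 23) ^ 2) < log (2 * (6 / 23) ^ 6) :=
      log_lt_log (by norm_num) (by norm_num)
    rw [log_mul (by norm_num) (by norm_num), log_mul (by norm_num) (by norm_num), log_pow,
      log_pow, log_pow] at key
    norm_num [binCrossEnt, logb]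
    field_simp
    linarith
  refine ⟨2 / 3, ⟨by norm_num, by norm_num⟩, rfl, by norm_num, fun x hx => ?_⟩
  norm_num only
  exact binEnt_sub_binEnt_mul_lt (by norm_num) (by norm_num) (by norm_num) (by norm_num) h₀ h₁ hx
end
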